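/- arXiv:1909.07954 — 6 statements merged into one kernel-verified Lean document; each statement's English description precedes it below -/
import Mathlib

section
/- Let q = p^s be an odd prime power, e a divisor of s with s/e = 2r, and L(X) = Σ_{i=0}^{2r-1} c_i X^{p^{ie}} a linearized polynomial over F_q. Define f(x,y) = Tr_{q/p^e}(x·L(y)). Then f is an alternating F_{p^e}-bilinear form on F_q (viewed as an F_{p^e}-vector space) if and only if c_0 = 0 and c_{2r-i}^{p^{ie}} = -c_i for all 1 ≤ i ≤ 2r-1. -/
/-!
Expanding `f(x, x) = Tr(x L(x))` gives a polynomial in `x` with exponents `p^{je} + p^{le}`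
(`j, l < 2r`), all smaller than `q` because `p ≥ 3`; so if `f` is alternating this polynomial is
zero. Its coefficient of `X^2` is `c_0` and that of `X^{1 + p^{ie}}` is `c_i + c_{2r-i}^{p^{ie}}`.
Conversely, under these relations `(x c_{2r-i} x^{p^{(2r-i)e}})^{p^{ie}} = -x c_i x^{p^{ie}}`, so by
Frobenius invariance of the trace the sum of the terms `Tr(x c_i x^{p^{ie}})` over `0 < i < 2r`
equals its own negative, hence vanishes as `p ≠ 2`.
-/

open Finset Polynomial

section FrobeniusTrace

variable (F : Type*) [CommRing F] (p : ℕ) [ExpChar F p] (e m : ℕ)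

/-- For `Fintype.card F = p ^ (m * e)` this is the relative trace `Tr_{F/𝔽_{p^e}}`. -/
def frobeniusTrace : F →+ F :=
  ∑ j ∈ range m, (iterateFrobenius F p (j * e)).toAddMonoidHom

variable {F p e m}

lemma frobeniusTrace_apply (z : F) :
    frobeniusTrace F p e m z = ∑ j ∈ range m, z ^ p ^ (j * e) := by
  simp [frobeniusTrace, iterateFrobenius_def]

end FrobeniusTrace

lemma Nat.eq_zero_and_eq_zero_of_pow_add_pow_eq_two {p u v : ℕ} (hp : 1 < p)
    (h : p ^ u + p ^ v = 2) : u = 0 ∧ v = 0 := by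
  have hu := Nat.one_le_pow u p (by omega)
  have hv := Nat.one_le_pow v p (by omega)
  have hu1 : p ^ u = 1 := by omega
  have hv1 : p ^ v = 1 := by omega
  simp only [Nat.pow_eq_one, hp.ne', false_or] at hu1 hv1
  exact ⟨hu1, hv1⟩

lemma Nat.eq_of_pow_add_pow_eq_one_add_pow {p u v w : ℕ} (hp : 1 < p) (hw : 0 < w)
    (h : p ^ u + p ^ v = 1 + p ^ w) : (u = 0 ∧ v = w) ∨ (u = w ∧ v = 0) := by
  have hinj := Nat.pow_right_injective hp
  rcases Nat.eq_zero_or_pos u with rfl | hu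
  · exact .inl ⟨rfl, hinj (by simpa [add_comm] using h)⟩
  rcases Nat.eq_zero_or_pos v with rfl | hv
  · exact .inr ⟨hinj (by simpa [add_comm] using h), rfl⟩
  -- `p` divides the left side but not the right side
  have hdvd : p ∣ 1 + p ^ w := h ▸ dvd_add (dvd_pow_self p hu.ne') (dvd_pow_self p hv.ne')
  have : p ∣ 1 := (Nat.dvd_add_left (dvd_pow_self p hw.ne')).mp hdvd
  exact absurd (Nat.le_of_dvd one_pos this) (by omega)

lemma Nat.pow_mul_add_pow_mul_lt_pow_mul {p e m j l : ℕ} (hpe : 2 < p ^ e) (hj : j < m)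
    (hl : l < m) : p ^ (j * e) + p ^ (l * e) < p ^ (m * e) := by
  rw [pow_mul', pow_mul', pow_mul']
  obtain ⟨n, rfl⟩ : ∃ n, m = n + 1 := ⟨m - 1, by omega⟩
  have hj' := Nat.pow_le_pow_right (by omega : 0 < p ^ e) (Nat.lt_succ_iff.mp hj)
  have hl' := Nat.pow_le_pow_right (by omega : 0 < p ^ e) (Nat.lt_succ_iff.mp hl)
  have hpos : 0 < (p ^ e) ^ n := Nat.pos_of_ne_zero (by positivity)
  have := Nat.mul_le_mul_left ((p ^ e) ^ n) (show 3 ≤ p ^ e from hpe)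
  rw [pow_succ]
  linarith

section ExponentFibers

variable {p e m : ℕ}

lemma filter_pow_add_pow_mod_eq_two (hp : 1 < p) (he : 0 < e) (hm : 0 < m) :
    {t ∈ range m ×ˢ range m | p ^ (t.1 * e) + p ^ ((t.2 + t.1) % m * e) = 2} = {(0, 0)} := by
  ext ⟨j, i⟩
  simp only [mem_filter, mem_product, mem_range, mem_singleton, Prod.mk.injEq]
  constructor
  · rintro ⟨⟨hj, hi⟩, h⟩
    obtain ⟨hj0, hij⟩ := Nat.eq_zero_and_eq_zero_of_pow_add_pow_eq_two hp h
    simp only [Nat.mul_eq_zero, he.ne', or_false] at hj0 hij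
    rw [Nat.add_mod_eq_ite, Nat.mod_eq_of_lt hi, Nat.mod_eq_of_lt hj] at hij
    split_ifs at hij <;> omega
  · rintro ⟨rfl, rfl⟩
    simp [hm]

lemma filter_pow_add_pow_mod_eq_one_add_pow (hp : 1 < p) (he : 0 < e) {k : ℕ} (hk0 : 0 < k)
    (hkm : k < m) :
    {t ∈ range m ×ˢ range m | p ^ (t.1 * e) + p ^ ((t.2 + t.1) % m * e) = 1 + p ^ (k * e)} =
      {(0, k), (k, m - k)} := by
  ext ⟨j, i⟩
  simp only [mem_filter, mem_product, mem_range, mem_insert, mem_singleton, Prod.mk.injEq]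
  constructor
  · rintro ⟨⟨hj, hi⟩, h⟩
    have h' := Nat.eq_of_pow_add_pow_eq_one_add_pow hp (Nat.mul_pos hk0 he) h
    simp only [Nat.mul_eq_zero, he.ne', or_false, Nat.mul_left_inj he.ne'] at h'
    rw [Nat.add_mod_eq_ite, Nat.mod_eq_of_lt hi, Nat.mod_eq_of_lt hj] at h'
    split_ifs at h' <;> omega
  · rintro (⟨rfl, rfl⟩ | ⟨rfl, rfl⟩)
    · simp [hkm, Nat.mod_eq_of_lt hkm, hk0.trans hkm]
    · simp [hkm, hk0, hk0.trans hkm, Nat.sub_add_cancel hkm.le, add_comm]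

end ExponentFibers

section FiniteField

variable {F : Type*} [Field F] [Fintype F] {p : ℕ}

lemma pow_pow_eq_pow_pow_mod {n : ℕ} (hq : Fintype.card F = p ^ n) (x : F) (k : ℕ) :
    x ^ p ^ k = x ^ p ^ (k % n) := by
  conv_lhs => rw [← Nat.div_add_mod k n, pow_add, pow_mul x, pow_mul p, ← hq,
    FiniteField.pow_card_pow]

variable [ExpChar F p] {e m : ℕ}

lemma frobeniusTrace_pow_pow (hq : Fintype.card F = p ^ (m * e)) (z : F) :
    frobeniusTrace F p e m (z ^ p ^ e) = frobeniusTrace F p e m z := by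
  set g : ℕ → F := fun j => z ^ p ^ (j * e)
  have hshift : ∀ j, (z ^ p ^ e) ^ p ^ (j * e) = g (j + 1) := fun j => by
    simp only [g, ← pow_mul, ← pow_add, add_mul, one_mul, add_comm]
  have hperiod : g m = g 0 := by
    simp only [g, ← hq, FiniteField.pow_card, zero_mul, pow_zero, pow_one]
  rw [frobeniusTrace_apply, frobeniusTrace_apply]
  simp only [hshift]
  apply add_right_cancel (b := g 0)
  rw [← sum_range_succ', sum_range_succ, hperiod]

lemma frobeniusTrace_pow_pow_mul (hq : Fintype.card F = p ^ (m * e)) (z : F) (i : ℕ) :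
    frobeniusTrace F p e m (z ^ p ^ (i * e)) = frobeniusTrace F p e m z := by
  induction i with
  | zero => simp
  | succ i ih => rw [add_mul, one_mul, pow_add, pow_mul, frobeniusTrace_pow_pow hq, ih]

lemma frobeniusTrace_mul_sum (hq : Fintype.card F = p ^ (m * e)) (c : ℕ → F) (x : F) :
    frobeniusTrace F p e m (x * ∑ i ∈ range m, c i * x ^ p ^ (i * e)) =
      ∑ t ∈ range m ×ˢ range m,
        c t.2 ^ p ^ (t.1 * e) * x ^ (p ^ (t.1 * e) + p ^ ((t.2 + t.1) % m * e)) := by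
  rw [frobeniusTrace_apply, sum_product]
  refine sum_congr rfl fun j _ => ?_
  rw [mul_sum, sum_pow_char_pow]
  refine sum_congr rfl fun i _ => ?_
  rw [pow_add, ← Nat.mul_mod_mul_right, ← pow_pow_eq_pow_pow_mod hq, add_mul, pow_add, pow_mul]
  ring

lemma sum_fiber_eq_zero_of_forall_sum_mul_pow_eq_zero {ι : Type*} (s : Finset ι) (a : ι → F)
    (n : ι → ℕ) (hn : ∀ t ∈ s, n t < Fintype.card F) (h : ∀ x : F, ∑ t ∈ s, a t * x ^ n t = 0)
    (k : ℕ) : ∑ t ∈ s with n t = k, a t = 0 := by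
  classical
  set P : F[X] := ∑ t ∈ s, monomial (n t) (a t)
  have hP : P = 0 := by
    refine eq_zero_of_natDegree_lt_card_of_eval_eq_zero' P univ (fun x _ => ?_) ?_
    · simpa [P, eval_finsetSum] using h x
    · rw [card_univ]
      refine lt_of_le_of_lt (natDegree_sum_le_of_forall_le _ _ fun t ht =>
        (natDegree_monomial_le _).trans (Nat.le_pred_of_lt (hn t ht))) ?_
      exact Nat.pred_lt Fintype.card_ne_zero
  simpa [P, finsetSum_coeff, coeff_monomial, sum_filter] using congrArg (coeff · k) hP

lemma coeff_relations_of_frobeniusTrace_mul_sum_eq_zero (hq : Fintype.card F = p ^ (m * e))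
    (hm : 0 < m) (hpe : 2 < p ^ e) (c : ℕ → F)
    (h : ∀ x : F, frobeniusTrace F p e m (x * ∑ i ∈ range m, c i * x ^ p ^ (i * e)) = 0) :
    c 0 = 0 ∧ ∀ k, 0 < k → k < m → c (m - k) ^ p ^ (k * e) = -c k := by
  have hp : 1 < p := by
    contrapose! hpe
    exact (Nat.pow_le_pow_left hpe e).trans (by simp)
  have he : 0 < e := Nat.pos_of_ne_zero (by rintro rfl; simp at hpe)
  have hfiber := sum_fiber_eq_zero_of_forall_sum_mul_pow_eq_zero (range m ×ˢ range m)
    (fun t => c t.2 ^ p ^ (t.1 * e)) (fun t => p ^ (t.1 * e) + p ^ ((t.2 + t.1) % m * e))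
    (fun t ht => hq ▸ Nat.pow_mul_add_pow_mul_lt_pow_mul hpe (mem_range.mp (mem_product.mp ht).1)
      (Nat.mod_lt _ hm))
    (fun x => (frobeniusTrace_mul_sum hq c x).symm.trans (h x))
  refine ⟨?_, fun k hk0 hkm => ?_⟩
  · simpa [filter_pow_add_pow_mod_eq_two hp he hm] using hfiber 2
  · have hk := hfiber (1 + p ^ (k * e))
    rw [filter_pow_add_pow_mod_eq_one_add_pow hp he hk0 hkm,
      sum_pair (by simp [Prod.ext_iff]; omega)] at hk
    simp only [zero_mul, pow_zero, pow_one] at hk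
    linear_combination hk

lemma frobeniusTrace_mul_sum_eq_zero (hq : Fintype.card F = p ^ (m * e)) (hF : ringChar F ≠ 2)
    (c : ℕ → F) (hc0 : c 0 = 0) (hc : ∀ k, 0 < k → k < m → c (m - k) ^ p ^ (k * e) = -c k)
    (x : F) : frobeniusTrace F p e m (x * ∑ i ∈ range m, c i * x ^ p ^ (i * e)) = 0 := by
  set T := frobeniusTrace F p e m
  set a : ℕ → F := fun i => x * (c i * x ^ p ^ (i * e))
  have hpair : ∀ k, 0 < k → k < m → T (a (m - k)) = -T (a k) := by
    intro k hk0 hkm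
    rw [← frobeniusTrace_pow_pow_mul hq _ k, ← map_neg]
    congr 1
    simp only [a, mul_pow, ← pow_mul, ← pow_add, hc k hk0 hkm]
    rw [← add_mul, Nat.sub_add_cancel hkm.le, ← hq, FiniteField.pow_card]
    ring
  rcases Nat.eq_zero_or_pos m with rfl | hm
  · simp
  rw [mul_sum, map_sum, range_eq_Ico, sum_eq_sum_Ico_succ_bot hm]
  simp only [hc0, zero_mul, mul_zero, map_zero, zero_add]
  set S := ∑ i ∈ Ico 1 m, T (a i)
  have hS : -S = S := calc
    -S = ∑ i ∈ Ico 1 m, T (a (m - i)) := by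
      rw [← sum_neg_distrib]
      exact sum_congr rfl fun i hi => (hpair i (mem_Ico.mp hi).1 (mem_Ico.mp hi).2).symm
    _ = S := by simp [S, sum_Ico_reflect (fun i => T (a i)) 1 (Nat.le_succ m)]
  exact (Ring.eq_self_iff_eq_zero_of_char_ne_two hF).mp hS

end FiniteField

/-- Let `q = p^s` be an odd prime power, `e ∣ s` with `s/e = 2r`, and
`L(X) = Σ_{i=0}^{2r-1} c_i X^{p^{ie}}` a linearized polynomial over `F_q`.
Define `f(x,y) = Tr_{q/p^e}(x·L(y))`, where `Tr_{q/p^e}(z) = Σ_{j=0}^{2r-1} z^{p^{je}}`.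
Then `f` is an alternating form (i.e. `f(x,x) = 0` for all `x`; it is automatically
`F_{p^e}`-bilinear) if and only if `c_0 = 0` and `c_{2r-i}^{p^{ie}} = -c_i` for
all `1 ≤ i ≤ 2r-1`. -/
theorem statement_0 (p s e r : ℕ) (hp : p.Prime) (hpodd : Odd p)
    (hr : 0 < r) (he : 0 < e) (hs : s = 2 * r * e)
    (F : Type*) [Field F] [Fintype F] (hF : Fintype.card F = p ^ s)
    (c : ℕ → F)
    (L : F → F) (hL : ∀ x, L x = ∑ i ∈ Finset.range (2 * r), c i * x ^ p ^ (i * e))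
    (Tr : F → F) (hTr : ∀ z, Tr z = ∑ j ∈ Finset.range (2 * r), z ^ p ^ (j * e))
    (f : F → F → F) (hf : ∀ x y, f x y = Tr (x * L y)) :
    (∀ x, f x x = 0) ↔
      (c 0 = 0 ∧ ∀ i, 1 ≤ i → i ≤ 2 * r - 1 → c (2 * r - i) ^ p ^ (i * e) = - c i) := by
  have : Fact p.Prime := ⟨hp⟩
  have : CharP F p := charP_of_card_eq_prime_pow hF
  have hq : Fintype.card F = p ^ (2 * r * e) := hs ▸ hF
  have hfx : ∀ x, f x x = frobeniusTrace F p e (2 * r)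
      (x * ∑ i ∈ range (2 * r), c i * x ^ p ^ (i * e)) := fun x => by
    rw [hf, hTr, hL, frobeniusTrace_apply]
  have hp2 : p ≠ 2 := fun h => Nat.not_even_iff_odd.mpr hpodd (h ▸ even_two)
  simp only [hfx]
  constructor
  · intro h
    obtain ⟨hc0, hc⟩ := coeff_relations_of_frobeniusTrace_mul_sum_eq_zero hq (by omega)
      ((hp.two_le.lt_of_ne' hp2).trans_le (Nat.le_self_pow he.ne' p)) c h
    exact ⟨hc0, fun i hi1 hi2 => hc i hi1 (by omega)⟩
  · rintro ⟨hc0, hc⟩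
    exact frobeniusTrace_mul_sum_eq_zero hq (ringChar.eq F p ▸ hp2) c hc0
      fun k hk0 hkm => hc k hk0 (by omega)
end

section
/- Let V be a 2r-dimensional symplectic space over F_{p^e} with polar space W(2r-1,p^e), and let M be a set of projective points. Then M is an m-ovoid (every maximal totally isotropic subspace meets M in exactly m points) if and only if for every projective point P: |P^⊥ ∩ M| = m(p^{e(r-1)}+1) - p^{e(r-1)} when P ∈ M, and |P^⊥ ∩ M| = m(p^{e(r-1)}+1) when P ∉ M. -/
/-!
Double counting, with `q = p ^ e`. The generators (totally isotropic `r`-spaces) through a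
totally isotropic `k`-space number `∏_{i < r - k} (q ^ (i + 1) + 1)`, by counting pairs
(point of `S^⊥ \ S`, generator through `S`). Hence a point `Q ≠ P` lies on a
`1 / (q ^ (r - 1) + 1)` fraction of the generators through `P` if `Q ∈ P^⊥` and on none otherwise,
and counting pairs (point of `M`, generator through `P` containing it) gives the value of
`|P^⊥ ∩ M|` for an `m`-ovoid. Conversely, summing `|P^⊥ ∩ M| + q ^ (r - 1) [P ∈ M]` first over
all points gives `|M| = m (q ^ r + 1)`, since `Q^⊥` is a hyperplane for every `Q`; summing it
over the points of a generator `W` then gives `|W ∩ M| = m`, since `Q^⊥ ∩ W` is all of `W` when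
`Q ∈ W` and a hyperplane of `W` otherwise.
-/

open Module Finset

namespace Submodule

variable {K V : Type*} [Field K] [AddCommGroup V] [Module K V]

lemma finrank_sup_of_finrank_eq_one [Module.Finite K V] {S P : Submodule K V}
    (hP : finrank K P = 1) (hPS : ¬ P ≤ S) : finrank K ↥(S ⊔ P) = finrank K S + 1 := by
  have hdisj : S ⊓ P = ⊥ :=
    (((isAtom_iff_finrank_eq_one.mpr hP).not_le_iff_disjoint.mp hPS).symm).eq_bot
  have := finrank_sup_add_finrank_inf_eq S P
  rwa [hdisj, finrank_bot, add_zero, hP] at this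

variable [Finite K] [Module.Finite K V]

instance : Finite (Submodule K V) :=
  have := Module.finite_of_finite K (M := V)
  .of_injective _ SetLike.coe_injective

noncomputable instance : Fintype (Submodule K V) := .ofFinite _

open Classical in
noncomputable def points (W : Submodule K V) : Finset (Submodule K V) :=
  {P | finrank K P = 1 ∧ P ≤ W}

lemma mem_points {W P : Submodule K V} : P ∈ points W ↔ finrank K P = 1 ∧ P ≤ W := by
  simp [points]

lemma points_mono {U W : Submodule K V} (h : U ≤ W) : points U ⊆ points W := fun _ hP ↦
  mem_points.mpr ⟨(mem_points.mp hP).1, (mem_points.mp hP).2.trans h⟩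

lemma points_inf (W W' : Submodule K V) [DecidablePred (· ≤ W')] :
    points (W ⊓ W') = {P ∈ points W | P ≤ W'} := by
  ext P
  simp [mem_points, and_assoc]

lemma natCard_projectivization_eq_card_points (W : Submodule K V) :
    Nat.card (Projectivization K W) = #(points W) := by
  classical
  let e : {H : Submodule K W // finrank K H = 1} ≃ {P // P ∈ points W} :=
    ((MapSubtype.orderIso W).toEquiv.subtypeEquiv (p := fun H : Submodule K W ↦ finrank K H = 1)
      (q := fun P ↦ finrank K P.1 = 1) fun H ↦ by
        rw [← finrank_map_subtype_eq W H]; rfl)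
    |>.trans ((Equiv.subtypeSubtypeEquivSubtypeInter (· ≤ W) (finrank K · = 1)).trans
      (Equiv.subtypeEquivRight fun P ↦ by rw [mem_points, and_comm]))
  rw [Nat.card_congr ((Projectivization.equivSubmodule K W).trans e), Nat.card_eq_fintype_card,
    Fintype.card_coe]

lemma card_points_mul (W : Submodule K V) :
    (#(points W) : ℤ) * (Nat.card K - 1) = (Nat.card K : ℤ) ^ finrank K W - 1 := by
  have h := Projectivization.card K W
  rw [natCard_projectivization_eq_card_points, natCard_eq_pow_finrank (K := K)] at h
  have : 1 ≤ Nat.card K := Finite.card_pos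
  have : 1 ≤ Nat.card K ^ finrank K W := Nat.one_le_pow _ _ this
  zify [*] at h
  exact h.symm

lemma card_points_sdiff_mul {U W : Submodule K V} (h : U ≤ W) :
    (#(points W \ points U) : ℤ) * (Nat.card K - 1) =
      (Nat.card K : ℤ) ^ finrank K W - (Nat.card K : ℤ) ^ finrank K U := by
  classical
  rw [card_sdiff_of_subset (points_mono h), Nat.cast_sub (card_le_card (points_mono h)), sub_mul,
    card_points_mul, card_points_mul]
  ring

end Submodule

namespace LinearMap.BilinForm

variable {K V : Type*} [Field K] [AddCommGroup V] [Module K V] {B : LinearMap.BilinForm K V}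
  {S T : Submodule K V}

lemma le_orthogonal_iff : S ≤ B.orthogonal T ↔ ∀ x ∈ T, ∀ y ∈ S, B x y = 0 :=
  ⟨fun h x hx _ hy ↦ h hy x hx, fun h y hy x hx ↦ h x hx y hy⟩

lemma IsRefl.le_orthogonal_comm (hB : B.IsRefl) : S ≤ B.orthogonal T ↔ T ≤ B.orthogonal S := by
  simp only [le_orthogonal_iff]
  exact ⟨fun h x hx y hy ↦ hB _ _ (h y hy x hx), fun h x hx y hy ↦ hB _ _ (h y hy x hx)⟩

lemma IsRefl.sup_le_orthogonal_sup (hB : B.IsRefl) (hS : S ≤ B.orthogonal S)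
    (hT : T ≤ B.orthogonal T) (hST : T ≤ B.orthogonal S) : S ⊔ T ≤ B.orthogonal (S ⊔ T) := by
  have hTS : S ≤ B.orthogonal T := hB.le_orthogonal_comm.mp hST
  have : B.orthogonal S ⊓ B.orthogonal T ≤ B.orthogonal (S ⊔ T) := by
    intro y ⟨hyS, hyT⟩ x hx
    obtain ⟨s, hs, t, ht, rfl⟩ := Submodule.mem_sup.mp hx
    simp [(mem_orthogonal_iff.mp hyS) s hs, (mem_orthogonal_iff.mp hyT) t ht]
  exact le_trans (sup_le (le_inf hS hTS) (le_inf hST hT)) this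

lemma IsAlt.le_orthogonal_self_of_finrank_eq_one (hB : B.IsAlt) (hS : finrank K S = 1) :
    S ≤ B.orthogonal S := by
  rw [le_orthogonal_iff]
  intro x hx y hy
  obtain rfl | hx0 := eq_or_ne x 0
  · simp
  obtain ⟨c, hc⟩ := exists_smul_eq_of_finrank_eq_one hS (x := ⟨x, hx⟩) (by simpa using hx0) ⟨y, hy⟩
  obtain rfl : c • x = y := congrArg Subtype.val hc
  simp [hB.self_eq_zero x]

variable [Module.Finite K V] {r : ℕ}

lemma orthogonal_eq_self (hnd : B.Nondegenerate) (hV : finrank K V = 2 * r) {W : Submodule K V}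
    (hW : W ≤ B.orthogonal W) (hWr : finrank K W = r) : B.orthogonal W = W :=
  (Submodule.eq_of_le_of_finrank_le hW (by rw [finrank_orthogonal hnd]; omega)).symm

open Classical in
lemma finrank_inf_orthogonal (hB : B.IsRefl) (hnd : B.Nondegenerate) (hV : finrank K V = 2 * r)
    {W Q : Submodule K V} (hW : W ≤ B.orthogonal W) (hWr : finrank K W = r)
    (hQ : finrank K Q = 1) :
    finrank K ↥(W ⊓ B.orthogonal Q) = if Q ≤ W then r else r - 1 := by
  have hWW := orthogonal_eq_self hnd hV hW hWr
  split_ifs with hQW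
  · rw [inf_eq_left.mpr (hB.le_orthogonal_comm.mp (hQW.trans hW)), hWr]
  · have hWQ : ¬ W ≤ B.orthogonal Q := fun h ↦ hQW ((hB.le_orthogonal_comm.mp h).trans hWW.le)
    have hQQ : finrank K (B.orthogonal Q) = 2 * r - 1 := by rw [finrank_orthogonal hnd, hV, hQ]
    have hlt := Submodule.finrank_lt_finrank_of_lt (right_lt_sup.mpr hWQ : B.orthogonal Q < W ⊔ _)
    have hsum := Submodule.finrank_sup_add_finrank_inf_eq W (B.orthogonal Q)
    have hle := Submodule.finrank_le (W ⊔ B.orthogonal Q)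
    omega

open Submodule
open scoped Classical

variable [Finite K]

noncomputable def maximalsThrough (B : LinearMap.BilinForm K V) (r : ℕ) (S : Submodule K V) :
    Finset (Submodule K V) :=
  {W | W ≤ B.orthogonal W ∧ finrank K W = r ∧ S ≤ W}

lemma mem_maximalsThrough {W : Submodule K V} :
    W ∈ B.maximalsThrough r S ↔ W ≤ B.orthogonal W ∧ finrank K W = r ∧ S ≤ W := by
  simp [maximalsThrough]

lemma filter_maximalsThrough_le :
    {W ∈ B.maximalsThrough r S | T ≤ W} = B.maximalsThrough r (S ⊔ T) := by
  ext W
  simp [mem_maximalsThrough, and_assoc]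

lemma maximalsThrough_eq_singleton (hS : S ≤ B.orthogonal S) (hSr : finrank K S = r) :
    B.maximalsThrough r S = {S} := by
  ext W
  rw [mem_maximalsThrough, mem_singleton]
  refine ⟨fun ⟨_, hWr, hSW⟩ ↦ (eq_of_le_of_finrank_le hSW (by omega)).symm, ?_⟩
  rintro rfl
  exact ⟨hS, hSr, le_rfl⟩

lemma maximalsThrough_eq_empty (hS : ¬ S ≤ B.orthogonal S) : B.maximalsThrough r S = ∅ := by
  ext W
  simp only [mem_maximalsThrough, Finset.notMem_empty, iff_false, not_and]
  exact fun hW _ hSW ↦ hS (hSW.trans (hW.trans (orthogonal_le hSW)))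

lemma card_maximalsThrough_of_succ (hB : B.IsAlt) (hnd : B.Nondegenerate)
    (hV : finrank K V = 2 * r) {k t : ℕ} (hS : S ≤ B.orthogonal S)
    (hk : finrank K S + (k + 1) = r)
    (ht : ∀ T, T ≤ B.orthogonal T → finrank K T = finrank K S + 1 →
      #(B.maximalsThrough r T) = t) :
    #(B.maximalsThrough r S) = t * (Nat.card K ^ (k + 1) + 1) := by
  set q := Nat.card K
  set s := finrank K S
  set PP := points (B.orthogonal S) \ points S
  have hcount := sum_card_bipartiteAbove_eq_sum_card_bipartiteBelow (· ≤ ·)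
    (s := PP) (t := B.maximalsThrough r S)
  have habove : ∀ P ∈ PP, #(bipartiteAbove (· ≤ ·) (B.maximalsThrough r S) P) = t := by
    intro P hP
    obtain ⟨hPO, hPS⟩ := mem_sdiff.mp hP
    obtain ⟨hP1, hPO⟩ := mem_points.mp hPO
    rw [bipartiteAbove, filter_maximalsThrough_le]
    exact ht _ (hB.isRefl.sup_le_orthogonal_sup hS
      (hB.le_orthogonal_self_of_finrank_eq_one hP1) hPO)
      (finrank_sup_of_finrank_eq_one hP1 fun h ↦ hPS (mem_points.mpr ⟨hP1, h⟩))
  have hbelow : ∀ W ∈ B.maximalsThrough r S,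
      (#(bipartiteBelow (· ≤ ·) PP W) : ℤ) * (q - 1) = q ^ r - q ^ s := by
    intro W hW
    obtain ⟨hWW, hWr, hSW⟩ := mem_maximalsThrough.mp hW
    have : bipartiteBelow (· ≤ ·) PP W = points W \ points S := by
      ext P
      simp only [bipartiteBelow, PP, mem_filter, mem_sdiff, mem_points]
      have : P ≤ W → P ≤ B.orthogonal S := fun h ↦ h.trans (hWW.trans (orthogonal_le hSW))
      tauto
    rw [this, card_points_sdiff_mul hSW, hWr]
  have hPP : (#PP : ℤ) * (q - 1) = (q ^ r - q ^ s) * (q ^ (k + 1) + 1) := by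
    rw [card_points_sdiff_mul hS, finrank_orthogonal hnd, hV,
      show 2 * r - s = r + (k + 1) by omega, show r = s + (k + 1) by omega]
    ring
  rw [sum_congr rfl habove, sum_const, smul_eq_mul] at hcount
  have hq : 1 < q := Finite.one_lt_card
  have hpos : (q : ℤ) ^ s < q ^ r := pow_lt_pow_right₀ (by exact_mod_cast hq) (by omega)
  have key : ((q : ℤ) ^ r - q ^ s) * (t * (q ^ (k + 1) + 1)) =
      (q ^ r - q ^ s) * #(B.maximalsThrough r S) := by
    calc ((q : ℤ) ^ r - q ^ s) * (t * (q ^ (k + 1) + 1)) = (#PP * t : ℕ) * (q - 1) := by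
          push_cast; linear_combination (t : ℤ) * hPP.symm
      _ = ∑ W ∈ B.maximalsThrough r S, (#(bipartiteBelow (· ≤ ·) PP W) : ℤ) * (q - 1) := by
          rw [hcount]; push_cast; rw [sum_mul]
      _ = _ := by rw [sum_congr rfl hbelow, sum_const, nsmul_eq_mul, mul_comm]
  exact_mod_cast (mul_left_cancel₀ (sub_ne_zero.mpr hpos.ne') key).symm

theorem card_maximalsThrough (hB : B.IsAlt) (hnd : B.Nondegenerate)
    (hV : finrank K V = 2 * r) (k : ℕ) (hS : S ≤ B.orthogonal S) (hk : finrank K S + k = r) :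
    #(B.maximalsThrough r S) = ∏ i ∈ Finset.range k, (Nat.card K ^ (i + 1) + 1) := by
  induction k generalizing S with
  | zero => rw [maximalsThrough_eq_singleton hS hk, card_singleton, prod_range_zero]
  | succ k ih =>
    rw [prod_range_succ]
    exact card_maximalsThrough_of_succ hB hnd hV hS hk fun T hT hTs ↦ ih hT (by omega)

lemma card_maximalsThrough_of_finrank_eq_one (hB : B.IsAlt) (hnd : B.Nondegenerate)
    (hV : finrank K V = 2 * r) (hr : 2 ≤ r) {P : Submodule K V} (hP : finrank K P = 1) :
    #(B.maximalsThrough r P) = (∏ i ∈ Finset.range (r - 2), (Nat.card K ^ (i + 1) + 1)) *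
      (Nat.card K ^ (r - 1) + 1) := by
  rw [card_maximalsThrough hB hnd hV (r - 1) (hB.le_orthogonal_self_of_finrank_eq_one hP)
    (by omega), show r - 1 = r - 2 + 1 by omega, prod_range_succ, show r - 2 + 1 = r - 1 by omega]

lemma card_maximalsThrough_sup (hB : B.IsAlt) (hnd : B.Nondegenerate) (hV : finrank K V = 2 * r)
    (hr : 2 ≤ r) {P Q : Submodule K V} (hP : finrank K P = 1) (hQ : finrank K Q = 1) :
    #(B.maximalsThrough r (P ⊔ Q)) = (∏ i ∈ Finset.range (r - 2), (Nat.card K ^ (i + 1) + 1)) *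
      ((if Q ≤ B.orthogonal P then 1 else 0) + if Q = P then Nat.card K ^ (r - 1) else 0) := by
  have hPP := hB.le_orthogonal_self_of_finrank_eq_one hP
  by_cases hQP : Q = P
  · subst hQP
    rw [sup_idem, if_pos hPP, if_pos rfl, card_maximalsThrough_of_finrank_eq_one hB hnd hV hr hP,
      add_comm 1]
  by_cases hQO : Q ≤ B.orthogonal P
  · have hQnP : ¬ Q ≤ P := fun h ↦ hQP (eq_of_le_of_finrank_le h (by omega))
    rw [if_pos hQO, if_neg hQP, add_zero, mul_one]
    exact card_maximalsThrough hB hnd hV (r - 2)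
      (hB.isRefl.sup_le_orthogonal_sup hPP (hB.le_orthogonal_self_of_finrank_eq_one hQ) hQO)
      (by rw [finrank_sup_of_finrank_eq_one hQ hQnP]; omega)
  · rw [if_neg hQO, if_neg hQP, maximalsThrough_eq_empty]
    · simp
    exact fun h ↦ hQO (le_sup_right.trans (h.trans (orthogonal_le le_sup_left)))

def IsOvoid (B : LinearMap.BilinForm K V) (r : ℕ) (M : Finset (Submodule K V)) (m : ℕ) : Prop :=
  ∀ W : Submodule K V, W ≤ B.orthogonal W → finrank K W = r → #{P ∈ M | P ≤ W} = m

theorem IsOvoid.card_filter_le_orthogonal_add {M : Finset (Submodule K V)} {m : ℕ}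
    (hOv : B.IsOvoid r M m) (hB : B.IsAlt) (hnd : B.Nondegenerate) (hV : finrank K V = 2 * r)
    (hr : 2 ≤ r) (hM : ∀ Q ∈ M, finrank K Q = 1) {P : Submodule K V} (hP : finrank K P = 1) :
    #{Q ∈ M | Q ≤ B.orthogonal P} + (if P ∈ M then Nat.card K ^ (r - 1) else 0) =
      m * (Nat.card K ^ (r - 1) + 1) := by
  set E := Nat.card K ^ (r - 1)
  set T := ∏ i ∈ Finset.range (r - 2), (Nat.card K ^ (i + 1) + 1)
  have hcount := sum_card_bipartiteAbove_eq_sum_card_bipartiteBelow (· ≤ ·)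
    (s := M) (t := B.maximalsThrough r P)
  have habove : ∀ Q ∈ M, #(bipartiteAbove (· ≤ ·) (B.maximalsThrough r P) Q) =
      T * ((if Q ≤ B.orthogonal P then 1 else 0) + if Q = P then E else 0) := fun Q hQ ↦ by
    rw [bipartiteAbove, filter_maximalsThrough_le,
      card_maximalsThrough_sup hB hnd hV hr hP (hM Q hQ)]
  have hbelow : ∀ W ∈ B.maximalsThrough r P, #(bipartiteBelow (· ≤ ·) M W) = m := fun W hW ↦ by
    obtain ⟨hWW, hWr, -⟩ := mem_maximalsThrough.mp hW
    exact hOv W hWW hWr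
  rw [sum_congr rfl habove, sum_congr rfl hbelow, ← mul_sum, sum_add_distrib, ← card_filter,
    sum_ite_eq', sum_const, smul_eq_mul, card_maximalsThrough_of_finrank_eq_one hB hnd hV hr hP,
    mul_assoc] at hcount
  have hT : 0 < T := prod_pos fun i _ ↦ by positivity
  rw [Nat.eq_of_mul_eq_mul_left hT hcount, mul_comm]

lemma sum_card_points_inf_orthogonal (hB : B.IsRefl) {M : Finset (Submodule K V)}
    (hM : ∀ Q ∈ M, finrank K Q = 1) {E c : ℕ}
    (hc : ∀ P : Submodule K V, finrank K P = 1 →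
      #{Q ∈ M | Q ≤ B.orthogonal P} + (if P ∈ M then E else 0) = c) (U : Submodule K V) :
    ∑ Q ∈ M, #(points (U ⊓ B.orthogonal Q)) + #{Q ∈ M | Q ≤ U} * E = #(points U) * c := by
  have hcount := sum_card_bipartiteAbove_eq_sum_card_bipartiteBelow
    (fun P Q ↦ Q ≤ B.orthogonal P) (s := points U) (t := M)
  have hbelow : ∀ Q ∈ M, #(bipartiteBelow (fun P Q ↦ Q ≤ B.orthogonal P) (points U) Q) =
      #(points (U ⊓ B.orthogonal Q)) := fun Q _ ↦ by
    simp_rw [bipartiteBelow, hB.le_orthogonal_comm (S := Q), ← points_inf]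
  have hmem : points U ∩ M = {Q ∈ M | Q ≤ U} := by
    ext Q
    simp only [mem_inter, mem_points, mem_filter]
    exact ⟨fun h ↦ ⟨h.2, h.1.2⟩, fun h ↦ ⟨⟨hM Q h.1, h.2⟩, h.1⟩⟩
  rw [sum_congr rfl hbelow] at hcount
  calc ∑ Q ∈ M, #(points (U ⊓ B.orthogonal Q)) + #{Q ∈ M | Q ≤ U} * E
      = ∑ P ∈ points U, (#{Q ∈ M | Q ≤ B.orthogonal P} + if P ∈ M then E else 0) := by
        rw [sum_add_distrib, sum_ite_mem, sum_const, hmem, ← hcount, smul_eq_mul]; rfl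
    _ = #(points U) * c := by
        rw [sum_congr rfl fun P hP ↦ hc P (mem_points.mp hP).1, sum_const, smul_eq_mul]

lemma card_eq_of_card_filter_le_orthogonal_add (hB : B.IsRefl) (hnd : B.Nondegenerate)
    (hV : finrank K V = 2 * r) (hr : 1 ≤ r) {M : Finset (Submodule K V)}
    (hM : ∀ Q ∈ M, finrank K Q = 1) {m : ℕ}
    (hc : ∀ P : Submodule K V, finrank K P = 1 → #{Q ∈ M | Q ≤ B.orthogonal P} +
      (if P ∈ M then Nat.card K ^ (r - 1) else 0) = m * (Nat.card K ^ (r - 1) + 1)) :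
    #M = m * (Nat.card K ^ r + 1) := by
  set q := Nat.card K
  have h := congrArg (Nat.cast : ℕ → ℤ) (sum_card_points_inf_orthogonal hB hM hc ⊤)
  rw [filter_true_of_mem fun Q _ ↦ le_top] at h
  push_cast at h
  have hq : 1 < q := Finite.one_lt_card
  have hhyp : (∑ Q ∈ M, (#(points (⊤ ⊓ B.orthogonal Q)) : ℤ)) * (q - 1) =
      #M * ((q : ℤ) ^ (r - 1) * q ^ (r - 1) * q - 1) := by
    rw [sum_mul, sum_congr rfl fun Q hQ ↦ by
      rw [card_points_mul, top_inf_eq, finrank_orthogonal hnd, hV, hM Q hQ]]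
    rw [sum_const, nsmul_eq_mul, ← pow_add, ← pow_succ]
    congr 3; omega
  have hall : (#(points (⊤ : Submodule K V)) : ℤ) * (q - 1) =
      (q : ℤ) ^ (r - 1) * q ^ (r - 1) * q * q - 1 := by
    rw [card_points_mul, finrank_top, hV, ← pow_add, ← pow_succ, ← pow_succ]
    congr 2; omega
  have hE : 1 ≤ (q : ℤ) ^ (r - 1) := one_le_pow₀ (by exact_mod_cast hq.le)
  have hpos : 0 < ((q : ℤ) ^ (r - 1) + 1) * (q ^ (r - 1) * q - 1) := by
    have : (2 : ℤ) ≤ q := by exact_mod_cast hq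
    nlinarith
  have key : ((q : ℤ) ^ (r - 1) + 1) * (q ^ (r - 1) * q - 1) * #M =
      ((q : ℤ) ^ (r - 1) + 1) * (q ^ (r - 1) * q - 1) * (m * (q ^ (r - 1) * q + 1)) := by
    linear_combination (q - 1 : ℤ) * h - hhyp +
      (m * ((q : ℤ) ^ (r - 1) + 1)) * hall
  rw [show r = r - 1 + 1 by omega, pow_succ]
  exact_mod_cast mul_left_cancel₀ hpos.ne' key

theorem isOvoid_of_card_filter_le_orthogonal_add (hB : B.IsAlt) (hnd : B.Nondegenerate)
    (hV : finrank K V = 2 * r) (hr : 1 ≤ r) {M : Finset (Submodule K V)}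
    (hM : ∀ Q ∈ M, finrank K Q = 1) {m : ℕ}
    (hc : ∀ P : Submodule K V, finrank K P = 1 → #{Q ∈ M | Q ≤ B.orthogonal P} +
      (if P ∈ M then Nat.card K ^ (r - 1) else 0) = m * (Nat.card K ^ (r - 1) + 1)) :
    B.IsOvoid r M m := by
  intro W hW hWr
  set q := Nat.card K
  have hq : 1 < q := Finite.one_lt_card
  have hr1 : q ^ r = q ^ (r - 1) * q := by rw [← pow_succ]; congr 1; omega
  have hN := congrArg (Nat.cast : ℕ → ℤ)
    (card_eq_of_card_filter_le_orthogonal_add hB.isRefl hnd hV hr hM hc)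
  have h := congrArg (Nat.cast : ℕ → ℤ) (sum_card_points_inf_orthogonal hB.isRefl hM hc W)
  rw [hr1] at hN
  push_cast at h hN
  have hsplit : (∑ Q ∈ M, (#(points (W ⊓ B.orthogonal Q)) : ℤ)) * (q - 1) =
      #{Q ∈ M | Q ≤ W} * ((q : ℤ) ^ (r - 1) * q - 1) +
        (#M - #{Q ∈ M | Q ≤ W}) * ((q : ℤ) ^ (r - 1) - 1) := by
    have hterm : ∀ Q ∈ M, (#(points (W ⊓ B.orthogonal Q)) : ℤ) * (q - 1) =
        if Q ≤ W then (q : ℤ) ^ (r - 1) * q - 1 else (q : ℤ) ^ (r - 1) - 1 := fun Q hQ ↦ by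
      rw [card_points_mul, finrank_inf_orthogonal hB.isRefl hnd hV hW hWr (hM Q hQ)]
      split_ifs
      · rw [← pow_succ, Nat.sub_add_cancel hr]
      · rfl
    rw [sum_mul, sum_congr rfl hterm, sum_ite, sum_const, sum_const, nsmul_eq_mul, nsmul_eq_mul,
      ← card_filter_add_card_filter_not (s := M) (· ≤ W)]
    push_cast
    ring
  have hWpts : (#(points W) : ℤ) * (q - 1) = q ^ (r - 1) * q - 1 := by
    rw [card_points_mul, hWr, ← pow_succ]; congr 2; omega
  have hpos : 0 < 2 * (q : ℤ) ^ (r - 1) * (q - 1) := by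
    have : (1 : ℤ) < q := by exact_mod_cast hq
    positivity
  have key : 2 * (q : ℤ) ^ (r - 1) * (q - 1) * #{Q ∈ M | Q ≤ W} =
      2 * (q : ℤ) ^ (r - 1) * (q - 1) * m := by
    linear_combination (q - 1 : ℤ) * h - hsplit + (m * ((q : ℤ) ^ (r - 1) + 1)) * hWpts -
      ((q : ℤ) ^ (r - 1) - 1) * hN
  exact_mod_cast mul_left_cancel₀ hpos.ne' key

theorem isOvoid_iff (hB : B.IsAlt) (hnd : B.Nondegenerate) (hV : finrank K V = 2 * r)
    (hr : 2 ≤ r) {M : Finset (Submodule K V)} (hM : ∀ Q ∈ M, finrank K Q = 1) {m : ℕ} :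
    B.IsOvoid r M m ↔ ∀ P : Submodule K V, finrank K P = 1 →
      #{Q ∈ M | Q ≤ B.orthogonal P} + (if P ∈ M then Nat.card K ^ (r - 1) else 0) =
        m * (Nat.card K ^ (r - 1) + 1) :=
  ⟨fun hOv _ hP ↦ hOv.card_filter_le_orthogonal_add hB hnd hV hr hM hP,
    isOvoid_of_card_filter_le_orthogonal_add hB hnd hV (by omega) hM⟩

end LinearMap.BilinForm

theorem statement_7_general (p e r : ℕ) (hr : 2 ≤ r)
    (K : Type*) [Field K] [Fintype K] (hK : Fintype.card K = p ^ e)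
    (V : Type*) [AddCommGroup V] [Module K V] [FiniteDimensional K V]
    (hV : finrank K V = 2 * r)
    (f : V →ₗ[K] V →ₗ[K] K)
    (halt : ∀ x, f x x = 0)
    (hnd : ∀ y, (∀ x, f x y = 0) → y = 0)
    (M : Set (Submodule K V)) (hM : ∀ P ∈ M, finrank K P = 1)
    (m : ℕ) :
    (∀ W : Submodule K V, (∀ x ∈ W, ∀ y ∈ W, f x y = 0) → finrank K W = r →
        {P ∈ M | P ≤ W}.ncard = m)
    ↔ (∀ P : Submodule K V, finrank K P = 1 →
        ((P ∈ M →
            {Q ∈ M | ∀ x ∈ P, ∀ y ∈ Q, f x y = 0}.ncard =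
              m * (p ^ (e * (r - 1)) + 1) - p ^ (e * (r - 1))) ∧
         (P ∉ M →
            {Q ∈ M | ∀ x ∈ P, ∀ y ∈ Q, f x y = 0}.ncard =
              m * (p ^ (e * (r - 1)) + 1)))) := by
  classical
  have hB : LinearMap.BilinForm.IsAlt f := halt
  have hf : LinearMap.BilinForm.Nondegenerate f :=
    (LinearMap.IsRefl.nondegenerate_iff_separatingRight hB.isRefl).mpr hnd
  have hE : p ^ (e * (r - 1)) = Nat.card K ^ (r - 1) := by
    rw [Nat.card_eq_fintype_card, hK, pow_mul]
  have hncard : ∀ S : Submodule K V, {Q ∈ M | Q ≤ S}.ncard = #{Q ∈ M.toFinset | Q ≤ S} :=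
    fun S ↦ by rw [← Set.ncard_coe_finset]; simp
  simp only [← LinearMap.BilinForm.le_orthogonal_iff, hncard, hE]
  refine (LinearMap.BilinForm.isOvoid_iff hB hf hV hr (by simpa using hM)).trans
    (forall₂_congr fun P hP ↦ ?_)
  by_cases hPM : P ∈ M
  · have hPO : 1 ≤ #{Q ∈ M.toFinset | Q ≤ LinearMap.BilinForm.orthogonal f P} :=
      card_pos.mpr ⟨P, mem_filter.mpr
        ⟨Set.mem_toFinset.mpr hPM, hB.le_orthogonal_self_of_finrank_eq_one hP⟩⟩
    simp only [Set.mem_toFinset, hPM, if_true, not_true, false_imp_iff, and_true, true_imp_iff]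
    omega
  · simp only [Set.mem_toFinset, hPM, if_false, add_zero, false_imp_iff, not_false_eq_true,
      true_imp_iff, true_and]

/-- Let `V` be a `2r`-dimensional symplectic space over `F_{p^e}` (a non-degenerate
alternating bilinear form `f` on `V`), giving the polar space `W(2r-1,p^e)`, and let
`M` be a set of projective points (`1`-dimensional subspaces). Then `M` is an
`m`-ovoid — i.e. every maximal totally isotropic subspace (of vector dimension `r`)
contains exactly `m` points of `M` — if and only if for every projective point `P`:
`|P^⊥ ∩ M| = m(p^{e(r-1)}+1) - p^{e(r-1)}` when `P ∈ M`, and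
`|P^⊥ ∩ M| = m(p^{e(r-1)}+1)` when `P ∉ M`. -/
theorem statement_7 (p e r : ℕ) (hp : p.Prime) (he : 0 < e) (hr : 2 ≤ r)
    (K : Type*) [Field K] [Fintype K] (hK : Fintype.card K = p ^ e)
    (V : Type*) [AddCommGroup V] [Module K V] [FiniteDimensional K V]
    (hV : finrank K V = 2 * r)
    (f : V →ₗ[K] V →ₗ[K] K)
    (halt : ∀ x, f x x = 0)
    (hnd : ∀ y, (∀ x, f x y = 0) → y = 0)
    (M : Set (Submodule K V)) (hM : ∀ P ∈ M, finrank K P = 1)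
    (m : ℕ) :
    (∀ W : Submodule K V, (∀ x ∈ W, ∀ y ∈ W, f x y = 0) → finrank K W = r →
        {P ∈ M | P ≤ W}.ncard = m)
    ↔ (∀ P : Submodule K V, finrank K P = 1 →
        ((P ∈ M →
            {Q ∈ M | ∀ x ∈ P, ∀ y ∈ Q, f x y = 0}.ncard =
              m * (p ^ (e * (r - 1)) + 1) - p ^ (e * (r - 1))) ∧
         (P ∉ M →
            {Q ∈ M | ∀ x ∈ P, ∀ y ∈ Q, f x y = 0}.ncard =
              m * (p ^ (e * (r - 1)) + 1)))) :=
  statement_7_general p e r hr K hK V hV f halt hnd M hM m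
end

section
/- Let p be an odd prime, q = p^{2ℓt} with t even, N = p^ℓ + 1, e a positive integer with 2er = 2ℓt for odd r. Then gcd(N, (q-1)/(p^e-1)) = 2·gcd(N/2, (√q-1)/(p^e-1)). -/
/-!
Put `m = √q = p^(ℓt)`. Since `e ∣ ℓt`, `p^e - 1` divides `m - 1`, and
`(q - 1)/(p^e - 1) = (m - 1)/(p^e - 1) · (m + 1)`. As `t` is even, `N = p^ℓ + 1` divides
`p^(2ℓ) - 1`, hence `m - 1`, so `m + 1 ≡ 2 (mod N)` and the gcd with `N` only sees
`2 · (m - 1)/(p^e - 1)`. Finally `N` is even because `p` is odd.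
-/

namespace Nat

theorem add_one_dvd_pow_sub_one_of_even (a : ℕ) {t : ℕ} (ht : Even t) :
    a + 1 ∣ a ^ t - 1 := by
  obtain ⟨u, rfl⟩ := ht
  have hsq : a + 1 ∣ a ^ 2 - 1 := by
    rw [← one_pow 2, Nat.sq_sub_sq]
    exact Dvd.intro _ rfl
  rw [← two_mul, pow_mul]
  exact hsq.trans (Nat.sub_one_dvd_pow_sub_one _ u)

theorem gcd_mul_add_one_of_dvd_sub_one {N m : ℕ} (s : ℕ) (hm : 1 ≤ m) (hN : N ∣ m - 1) :
    N.gcd (s * (m + 1)) = N.gcd (2 * s) := by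
  have h : 2 ≡ m + 1 [MOD N] :=
    (Nat.modEq_iff_dvd' (by omega)).2 (by rwa [show m + 1 - 2 = m - 1 by omega])
  rw [Nat.gcd_comm, Nat.gcd_comm N, mul_comm 2]
  exact (h.symm.mul_left s).gcd_eq

theorem gcd_two_mul_of_even {N : ℕ} (s : ℕ) (hN : Even N) :
    N.gcd (2 * s) = 2 * (N / 2).gcd s := by
  conv_lhs => rw [← Nat.mul_div_cancel' hN.two_dvd]
  exact Nat.gcd_mul_left 2 (N / 2) s

end Nat

theorem statement_12_general (p ℓ t e r : ℕ) (hodd : Odd p) (ht : Even t)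
    (hert : e * r = ℓ * t) :
    Nat.gcd (p ^ ℓ + 1) ((p ^ (2 * ℓ * t) - 1) / (p ^ e - 1)) =
      2 * Nat.gcd ((p ^ ℓ + 1) / 2) ((p ^ (ℓ * t) - 1) / (p ^ e - 1)) := by
  set m := p ^ (ℓ * t) with hm
  have hq : p ^ (2 * ℓ * t) - 1 = (m - 1) * (m + 1) := by
    rw [mul_assoc, pow_mul', ← one_pow 2, Nat.sq_sub_sq, one_pow, mul_comm]
  have hdvd : p ^ e - 1 ∣ m - 1 := by
    rw [hm, ← hert, pow_mul]
    exact Nat.sub_one_dvd_pow_sub_one _ r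
  have hN : p ^ ℓ + 1 ∣ m - 1 := by
    rw [hm, pow_mul]
    exact Nat.add_one_dvd_pow_sub_one_of_even _ ht
  have hm1 : 1 ≤ m := Nat.one_le_pow _ _ hodd.pos
  rw [hq, ← Nat.div_mul_right_comm hdvd, Nat.gcd_mul_add_one_of_dvd_sub_one _ hm1 hN,
    Nat.gcd_two_mul_of_even _ hodd.pow.add_one]

/-- Let `p` be an odd prime, `q = p^(2ℓt)` with `t` even, `N = p^ℓ + 1`, and `e` a positive
integer with `2er = 2ℓt` for `r` odd. Then
`gcd(N, (q-1)/(p^e-1)) = 2 * gcd(N/2, (√q-1)/(p^e-1))`, where `√q = p^(ℓt)`. -/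
theorem statement_12 (p ℓ t e r : ℕ) (hp : p.Prime) (hodd : Odd p)
    (he : 0 < e) (hr : Odd r) (hℓ : 0 < ℓ) (ht : Even t) (h0t : 0 < t)
    (hert : e * r = ℓ * t) :
    Nat.gcd (p ^ ℓ + 1) ((p ^ (2 * ℓ * t) - 1) / (p ^ e - 1)) =
      2 * Nat.gcd ((p ^ ℓ + 1) / 2) ((p ^ (ℓ * t) - 1) / (p ^ e - 1)) :=
  statement_12_general p ℓ t e r hodd ht hert
end

section
/- Let N be even and consider the permutations of Z_N given by ρ: i ↦ i + 2d₀ and σ: i ↦ -1 - i, where d₀ is an odd divisor of N/2 with d₀ > 1. Then the group ⟨ρ,σ⟩ is dihedral with ⟨ρ,σ⟩ = {ρ^j, ρ^jσ : 0 ≤ j ≤ N/(2d₀) - 1}, and every orbit of ⟨ρ,σ⟩ on Z_N has size exactly N/d₀. -/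
def negOneSub (N : ℕ) : Equiv.Perm (ZMod N) where
  toFun i := -1 - i
  invFun i := -1 - i
  left_inv i := by ring
  right_inv i := by ring

def addTwoD (N d₀ : ℕ) : Equiv.Perm (ZMod N) := Equiv.addRight ((2 * d₀ : ℕ) : ZMod N)

section helpers
variable (N d₀ : ℕ)

lemma sigma_apply (i : ZMod N) : negOneSub N i = -1 - i := rfl

lemma sigma_sq : negOneSub N * negOneSub N = 1 := by
  ext i
  simp [Equiv.Perm.mul_apply, sigma_apply]

lemma sigma_inv : (negOneSub N)⁻¹ = negOneSub N :=
  inv_eq_of_mul_eq_one_right (sigma_sq N)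

lemma rho_zpow (j : ℤ) : (addTwoD N d₀) ^ j = Equiv.addRight (j • ((2*d₀ : ℕ) : ZMod N)) := by
  simp [addTwoD]

lemma rho_pow (j : ℕ) : (addTwoD N d₀) ^ j = Equiv.addRight (j • ((2*d₀ : ℕ) : ZMod N)) := by
  simp [addTwoD]

lemma sigma_mul_rho_zpow (j : ℤ) :
    negOneSub N * (addTwoD N d₀) ^ j = (addTwoD N d₀) ^ (-j) * negOneSub N := by
  ext i
  simp [Equiv.Perm.mul_apply, rho_zpow, sigma_apply]
  ring

lemma orderOf_rho : orderOf (addTwoD N d₀) = addOrderOf ((2*d₀ : ℕ) : ZMod N) := by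
  rw [← orderOf_ofAdd_eq_addOrderOf, orderOf_eq_orderOf_iff]
  intro n
  rw [rho_pow, ← ofAdd_nsmul, ofAdd_eq_one]
  constructor
  · intro h
    simpa using Equiv.ext_iff.1 h 0
  · intro h
    ext x
    simp
    simpa using h

end helpers

/-- Let `N` be even and let `ρ : i ↦ i + 2d₀`, `σ : i ↦ -1 - i` be permutations of
`Z_N`, where `d₀ > 1` is an odd divisor of `N/2`. Then
`⟨ρ,σ⟩ = {ρ^j, ρ^j σ : 0 ≤ j ≤ N/(2d₀) - 1}` (a dihedral group), and every orbit of
`⟨ρ,σ⟩` on `Z_N` has size exactly `N/d₀`. -/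
theorem statement_14 (N d₀ : ℕ) (hN : 0 < N) (hNeven : Even N)
    (hd₀ : Odd d₀) (hdvd : d₀ ∣ N / 2) (hd₀1 : 1 < d₀) :
    ((Subgroup.closure {addTwoD N d₀, negOneSub N} : Subgroup (Equiv.Perm (ZMod N))) :
        Set (Equiv.Perm (ZMod N))) =
      {g | ∃ j : ℕ, j ≤ N / (2 * d₀) - 1 ∧
        (g = (addTwoD N d₀) ^ j ∨ g = (addTwoD N d₀) ^ j * negOneSub N)} ∧
    ∀ i : ZMod N,
      (MulAction.orbit (Subgroup.closure {addTwoD N d₀, negOneSub N}) i).ncard =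
        N / d₀ := by
  haveI : NeZero N := ⟨hN.ne'⟩
  set ρ := addTwoD N d₀ with hρ
  set σ := negOneSub N with hσ
  set c : ZMod N := ((2*d₀ : ℕ) : ZMod N) with hc
  set m := N / (2 * d₀) with hm
  -- basic divisibility
  obtain ⟨k, hk⟩ : 2 * d₀ ∣ N := by
    obtain ⟨l, hl⟩ := hNeven
    obtain ⟨t, ht⟩ := hdvd
    have hl2 : N / 2 = l := by omega
    refine ⟨t, ?_⟩
    rw [mul_assoc]
    omega
  have hd₀pos : 0 < d₀ := by omega
  have hkm : m = k := by rw [hm, hk, Nat.mul_div_cancel_left _ (by omega)]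
  have h2N : (2:ℕ) ∣ N := ⟨d₀ * k, by rw [hk]; ring⟩
  have hkpos : 0 < k := by
    rcases Nat.eq_zero_or_pos k with h | h
    · subst h; simp at hk; omega
    · exact h
  have hmpos : 0 < m := by omega
  have hord : orderOf ρ = m := by
    rw [hρ, orderOf_rho, ZMod.addOrderOf_coe _ hN.ne']
    rw [Nat.gcd_eq_right ⟨k, hk⟩]
  -- integer-exponent membership characterization
  have mem_iff : ∀ g : Equiv.Perm (ZMod N),
      g ∈ {g : Equiv.Perm (ZMod N) | ∃ j : ℕ, j ≤ m - 1 ∧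
        (g = ρ ^ j ∨ g = ρ ^ j * σ)} ↔ ∃ j : ℤ, g = ρ ^ j ∨ g = ρ ^ j * σ := by
    intro g
    constructor
    · rintro ⟨j, _, h | h⟩
      · exact ⟨(j : ℤ), Or.inl (by rw [h, zpow_natCast])⟩
      · exact ⟨(j : ℤ), Or.inr (by rw [h, zpow_natCast])⟩
    · rintro ⟨j, h⟩
      have hmod : ρ ^ j = ρ ^ ((j % (m : ℤ)).toNat) := by
        rw [← zpow_natCast, Int.toNat_of_nonneg (Int.emod_nonneg _ (by exact_mod_cast hmpos.ne'))]
        rw [show ((m : ℤ)) = (orderOf ρ : ℤ) by rw [hord]]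
        exact (zpow_mod_orderOf ρ j).symm
      have hlt : (j % (m : ℤ)).toNat ≤ m - 1 := by
        have h1 : j % (m : ℤ) < (m : ℤ) := Int.emod_lt_of_pos _ (by exact_mod_cast hmpos)
        omega
      exact ⟨(j % (m : ℤ)).toNat, hlt, by rwa [← hmod]⟩
  -- the set is a subgroup
  have hσinv : σ⁻¹ = σ := sigma_inv N
  have hσσ : σ * σ = 1 := sigma_sq N
  have hconj : ∀ j : ℤ, σ * ρ ^ j = ρ ^ (-j) * σ := fun j => sigma_mul_rho_zpow N d₀ j
  set K : Subgroup (Equiv.Perm (ZMod N)) :=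
    { carrier := {g : Equiv.Perm (ZMod N) | ∃ j : ℕ, j ≤ m - 1 ∧
        (g = ρ ^ j ∨ g = ρ ^ j * σ)}
      one_mem' := (mem_iff 1).2 ⟨0, Or.inl (by simp)⟩
      mul_mem' := by
        intro a b ha hb
        rw [mem_iff] at ha hb ⊢
        obtain ⟨x, hx⟩ := ha
        obtain ⟨y, hy⟩ := hb
        rcases hx with hx | hx <;> rcases hy with hy | hy <;> subst hx <;> subst hy
        · exact ⟨x + y, Or.inl (by rw [zpow_add])⟩
        · exact ⟨x + y, Or.inr (by rw [zpow_add, mul_assoc])⟩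
        · refine ⟨x - y, Or.inr ?_⟩
          rw [mul_assoc, hconj y, ← mul_assoc, ← zpow_add]
          ring_nf
        · refine ⟨x - y, Or.inl ?_⟩
          rw [mul_assoc, ← mul_assoc σ, hconj y, mul_assoc, hσσ, mul_one, ← zpow_add]
          ring_nf
      inv_mem' := by
        intro a ha
        rw [mem_iff] at ha ⊢
        obtain ⟨x, hx | hx⟩ := ha <;> subst hx
        · exact ⟨-x, Or.inl (by rw [zpow_neg])⟩
        · refine ⟨x, Or.inr ?_⟩
          rw [mul_inv_rev, hσinv, ← zpow_neg, hconj (-x), neg_neg] } with hK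
  -- generators lie in the closure
  have hρmem : ρ ∈ Subgroup.closure {ρ, σ} :=
    Subgroup.subset_closure (Set.mem_insert _ _)
  have hσmem : σ ∈ Subgroup.closure {ρ, σ} :=
    Subgroup.subset_closure (Set.mem_insert_of_mem _ rfl)
  have part1 : ((Subgroup.closure {ρ, σ} : Subgroup (Equiv.Perm (ZMod N))) :
      Set (Equiv.Perm (ZMod N))) =
      {g : Equiv.Perm (ZMod N) | ∃ j : ℕ, j ≤ m - 1 ∧
        (g = ρ ^ j ∨ g = ρ ^ j * σ)} := by
    apply Set.Subset.antisymm
    · intro g hg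
      have : Subgroup.closure {ρ, σ} ≤ K := by
        rw [Subgroup.closure_le]
        rintro x hx
        rcases hx with rfl | rfl
        · exact (mem_iff _).2 ⟨1, Or.inl (zpow_one _).symm⟩
        · exact (mem_iff _).2 ⟨0, Or.inr (by simp)⟩
      exact this hg
    · rintro g ⟨j, _, rfl | rfl⟩
      · exact pow_mem hρmem j
      · exact mul_mem (pow_mem hρmem j) hσmem
  refine ⟨part1, ?_⟩
  -- orbits
  intro i
  set H : AddSubgroup (ZMod N) := AddSubgroup.zmultiples c with hH
  have hρzi : ∀ (j : ℤ) (x : ZMod N), (ρ ^ j) x = x + j • c := by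
    intro j x
    rw [hρ, rho_zpow]
    rfl
  have hsmul : ∀ (g : Equiv.Perm (ZMod N)) (hg : g ∈ Subgroup.closure {ρ, σ}) (x : ZMod N),
      (⟨g, hg⟩ : Subgroup.closure {ρ, σ}) • x = g x := fun _ _ _ => rfl
  have horb : MulAction.orbit (Subgroup.closure {ρ, σ}) i =
      ((i + ·) '' (H : Set (ZMod N))) ∪ (((-1 - i) + ·) '' (H : Set (ZMod N))) := by
    ext x
    constructor
    · rintro ⟨⟨g, hg⟩, rfl⟩
      have hg' := hg
      rw [← SetLike.mem_coe, part1, mem_iff] at hg'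
      obtain ⟨j, hj | hj⟩ := hg'
      · left
        refine ⟨j • c, zsmul_mem (AddSubgroup.mem_zmultiples c) j, ?_⟩
        show i + j • c = g i
        rw [hj, hρzi j i]
      · right
        refine ⟨j • c, zsmul_mem (AddSubgroup.mem_zmultiples c) j, ?_⟩
        show (-1 - i) + j • c = g i
        rw [hj, Equiv.Perm.mul_apply, hρzi j, hσ, sigma_apply]
    · rintro (⟨h, hh, rfl⟩ | ⟨h, hh, rfl⟩)
      · obtain ⟨j, rfl⟩ := AddSubgroup.mem_zmultiples_iff.1 hh
        refine ⟨⟨ρ ^ j, zpow_mem hρmem j⟩, ?_⟩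
        show (ρ ^ j) i = i + j • c
        rw [hρzi j i]
      · obtain ⟨j, rfl⟩ := AddSubgroup.mem_zmultiples_iff.1 hh
        refine ⟨⟨ρ ^ j * σ, mul_mem (zpow_mem hρmem j) hσmem⟩, ?_⟩
        show (ρ ^ j * σ) i = (-1 - i) + j • c
        rw [Equiv.Perm.mul_apply, hρzi j, hσ, sigma_apply]
  rw [horb]
  have hcardH : (H : Set (ZMod N)).ncard = m := by
    rw [← Nat.card_coe_set_eq]
    rw [show Nat.card (H : Set (ZMod N)) = Nat.card H from rfl]
    rw [hH, Nat.card_zmultiples, hc, ZMod.addOrderOf_coe _ hN.ne', Nat.gcd_eq_right ⟨k, hk⟩]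
  have hcA : ((i + ·) '' (H : Set (ZMod N))).ncard = m := by
    rw [Set.ncard_image_of_injective _ (add_right_injective i), hcardH]
  have hcB : (((-1 - i) + ·) '' (H : Set (ZMod N))).ncard = m := by
    rw [Set.ncard_image_of_injective _ (add_right_injective (-1 - i)), hcardH]
  have hHcast : ∀ h ∈ H, (ZMod.castHom h2N (ZMod 2)) h = 0 := by
    intro h hh
    obtain ⟨j, rfl⟩ := AddSubgroup.mem_zmultiples_iff.1 hh
    rw [map_zsmul, hc, map_natCast]
    have : ((2*d₀ : ℕ) : ZMod 2) = 0 := by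
      have : (2:ℕ) ∣ 2*d₀ := ⟨d₀, rfl⟩
      exact (ZMod.natCast_eq_zero_iff _ _).2 this
    rw [this, smul_zero]
  have hdisj : Disjoint ((i + ·) '' (H : Set (ZMod N)))
      (((-1 - i) + ·) '' (H : Set (ZMod N))) := by
    rw [Set.disjoint_left]
    rintro x ⟨h₁, hh₁, rfl⟩ ⟨h₂, hh₂, heq⟩
    have hmem : h₂ - h₁ + (-1) - 2*i = 0 := by linear_combination heq
    have h2i : (2*i + 1 : ZMod N) ∈ H := by
      have : (2*i + 1 : ZMod N) = h₂ - h₁ := by linear_combination -hmem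
      rw [this]
      exact sub_mem hh₂ hh₁
    have hz := hHcast _ h2i
    rw [map_add, map_mul, map_one] at hz
    have h2 : (ZMod.castHom h2N (ZMod 2)) (2 : ZMod N) = 0 := by
      have h22 : (2 : ZMod N) = ((2:ℕ) : ZMod N) := by push_cast; ring
      rw [h22, map_natCast]
      decide
    rw [h2, zero_mul, zero_add] at hz
    exact absurd hz (by decide)
  rw [Set.ncard_union_eq hdisj (Set.toFinite _) (Set.toFinite _), hcA, hcB]
  rw [hkm, hk, show 2*d₀*k = d₀*(2*k) by ring, Nat.mul_div_cancel_left _ hd₀pos]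
  omega
end

section
/- Let p₀ be an odd prime, p an odd prime, t even with p₀ ∤ t, ℓ = ℓ₀p₀, e = ℓ₀t, q = p^{2ℓt}, N = p^ℓ+1. Then d₀ = gcd(N/2, (√q-1)/(p^e-1)) > 1. -/
/-! Writing `N = p ^ ℓ + 1`, `N / 2` divides `p ^ (2ℓ) - 1` and hence `√q - 1 = (p ^ e - 1) · d`
with `d = (√q - 1) / (p ^ e - 1)`. If `N / 2` were coprime to `d`, it would divide
`gcd (p ^ e - 1, p ^ (2ℓ) - 1) = p ^ (2ℓ₀) - 1`, which is smaller than `N / 2` because `p₀ ≥ 3`. -/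

namespace Nat

theorem one_lt_gcd_of_dvd_mul_of_not_dvd {d a m : ℕ} (hd : d ≠ 0) (h : d ∣ a * m)
    (hna : ¬ d ∣ a) : 1 < d.gcd m := by
  have hne : d.gcd m ≠ 1 := fun hcop => hna (Coprime.dvd_of_dvd_mul_right hcop h)
  have hpos : d.gcd m ≠ 0 := fun h0 => hd (eq_zero_of_gcd_eq_zero_left h0)
  omega

theorem pow_add_one_dvd_pow_sub_one_of_two_mul_dvd {p ℓ n : ℕ} (h : 2 * ℓ ∣ n) :
    p ^ ℓ + 1 ∣ p ^ n - 1 := by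
  have hsq : p ^ (2 * ℓ) - 1 = (p ^ ℓ + 1) * (p ^ ℓ - 1) := by
    rw [mul_comm 2, pow_mul, ← Nat.sq_sub_sq (p ^ ℓ) 1, one_pow]
  exact (Dvd.intro _ hsq.symm).trans (pow_sub_one_dvd_pow_sub_one p h)

theorem two_dvd_pow_add_one {p : ℕ} (hp : Odd p) (ℓ : ℕ) : 2 ∣ p ^ ℓ + 1 :=
  (hp.pow.add_odd odd_one).two_dvd

theorem gcd_mul_two_mul_mul_of_coprime {k r t : ℕ} (hr : Coprime r t) (ht : 2 ∣ t) :
    gcd (k * t) (2 * (k * r)) = 2 * k := by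
  rw [mul_left_comm, gcd_mul_left, Coprime.gcd_mul_right_cancel_right 2 hr,
    gcd_eq_right ht, mul_comm]

theorem two_mul_pow_le_pow_mul {p k r : ℕ} (hp : 1 < p) (hk : 0 < k) (hr : 3 ≤ r) :
    2 * p ^ (2 * k) ≤ p ^ (k * r) := by
  calc 2 * p ^ (2 * k) ≤ p ^ k * p ^ (2 * k) := by
        gcongr
        exact hp.trans_le (le_self_pow₀ hp.le hk.ne')
    _ = p ^ (3 * k) := by rw [← pow_add]; ring_nf
    _ ≤ p ^ (k * r) := pow_le_pow_right₀ hp.le (by nlinarith)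

end Nat

theorem statement_17_general (p p₀ ℓ ℓ₀ t e : ℕ) (hp : p.Prime) (hpodd : Odd p)
    (hp₀ : p₀.Prime) (ht : Even t) (hndvd : ¬ p₀ ∣ t)
    (hℓ₀ : 0 < ℓ₀) (hℓ : ℓ = ℓ₀ * p₀) (he : e = ℓ₀ * t) :
    1 < Nat.gcd ((p ^ ℓ + 1) / 2) ((p ^ (ℓ * t) - 1) / (p ^ e - 1)) := by
  have hN : (p ^ ℓ + 1) / 2 * 2 = p ^ ℓ + 1 :=
    Nat.div_mul_cancel (Nat.two_dvd_pow_add_one hpodd ℓ)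
  have hN_dvd (n : ℕ) (h : 2 * ℓ ∣ n) : (p ^ ℓ + 1) / 2 ∣ p ^ n - 1 :=
    (Nat.div_dvd_of_dvd (Nat.two_dvd_pow_add_one hpodd ℓ)).trans
      (Nat.pow_add_one_dvd_pow_sub_one_of_two_mul_dvd h)
  have hp₀3 : 3 ≤ p₀ := by
    have : p₀ ≠ 2 := by rintro rfl; exact hndvd ht.two_dvd
    have := hp₀.two_le; omega
  have hdvd_mul : (p ^ ℓ + 1) / 2 ∣ (p ^ e - 1) * ((p ^ (ℓ * t) - 1) / (p ^ e - 1)) := by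
    rw [Nat.mul_div_cancel' (Nat.pow_sub_one_dvd_pow_sub_one p ⟨p₀, by rw [he, hℓ]; ring⟩)]
    obtain ⟨s, rfl⟩ := ht
    exact hN_dvd _ ⟨s, by ring⟩
  have hnot_dvd : ¬ (p ^ ℓ + 1) / 2 ∣ p ^ e - 1 := by
    intro hdvd
    have h2ℓ₀ : (p ^ ℓ + 1) / 2 ∣ p ^ (2 * ℓ₀) - 1 := by
      rw [← Nat.gcd_mul_two_mul_mul_of_coprime ((Nat.Prime.coprime_iff_not_dvd hp₀).mpr hndvd)
        ht.two_dvd, ← Nat.pow_sub_one_gcd_pow_sub_one, ← he, ← hℓ]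
      exact Nat.dvd_gcd hdvd (hN_dvd _ dvd_rfl)
    have hsmall := Nat.le_of_dvd (Nat.sub_pos_of_lt (Nat.one_lt_pow (by omega) hp.one_lt)) h2ℓ₀
    have hlarge := Nat.two_mul_pow_le_pow_mul hp.one_lt hℓ₀ hp₀3
    rw [← hℓ] at hlarge
    omega
  exact Nat.one_lt_gcd_of_dvd_mul_of_not_dvd (by omega) hdvd_mul hnot_dvd

/-- Case (B): `r = p₀` an odd prime not dividing `t`, `t` even, `ℓ = ℓ₀ p₀`, `e = ℓ₀ t`,
`q = p^(2ℓt)`, `N = p^ℓ + 1`, `√q = p^(ℓt)`. Then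
`d₀ = gcd(N/2, (√q-1)/(p^e-1)) > 1`. -/
theorem statement_17 (p p₀ ℓ ℓ₀ t e : ℕ) (hp : p.Prime) (hpodd : Odd p)
    (hp₀ : p₀.Prime) (hp₀odd : Odd p₀) (ht : Even t) (h0t : 0 < t) (hndvd : ¬ p₀ ∣ t)
    (hℓ₀ : 0 < ℓ₀) (hℓ : ℓ = ℓ₀ * p₀) (he : e = ℓ₀ * t) :
    1 < Nat.gcd ((p ^ ℓ + 1) / 2) ((p ^ (ℓ * t) - 1) / (p ^ e - 1)) :=
  statement_17_general p p₀ ℓ ℓ₀ t e hp hpodd hp₀ ht hndvd hℓ₀ hℓ he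
end

section
/- For p = 3, p₀ = 5, t = 2, ℓ = 5ℓ₀, e = 2ℓ₀: setting d₀ = gcd((3^{5ℓ₀}+1)/2, (3^{10ℓ₀}-1)/(3^{2ℓ₀}-1)), the quantity (3^{5ℓ₀}+1)/(3^{ℓ₀}+1) divides d₀, and consequently for fixed b, the ratio m/p^{e(p₀-2)} with m = b(√q-1)/(d₀(p^e-1)) satisfies m/p^{e(p₀-2)} ≤ b(3^{4ℓ₀}+3^{3ℓ₀}+3^{2ℓ₀}+3^{ℓ₀}+1)/3^{6ℓ₀}, which tends to 0 as ℓ₀ → ∞. -/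
open Filter

/-- `d₀ = gcd((3^{5ℓ₀}+1)/2, (3^{10ℓ₀}-1)/(3^{2ℓ₀}-1))` for `p = 3`, `p₀ = 5`, `t = 2`,
`ℓ = 5ℓ₀`, `e = 2ℓ₀`. -/
noncomputable def dZero (ℓ₀ : ℕ) : ℕ :=
  Nat.gcd ((3 ^ (5 * ℓ₀) + 1) / 2) ((3 ^ (10 * ℓ₀) - 1) / (3 ^ (2 * ℓ₀) - 1))

/-- The ratio `m / p^{e(p₀-2)}` where `m = b(√q-1)/(d₀(p^e-1))`, `√q = 3^{10ℓ₀}`,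
`p^e = 3^{2ℓ₀}`, `p^{e(p₀-2)} = 3^{6ℓ₀}`. -/
noncomputable def mRatio (b ℓ₀ : ℕ) : ℝ :=
  ((b : ℝ) * ((3 : ℝ) ^ (10 * ℓ₀) - 1) / ((dZero ℓ₀ : ℝ) * ((3 : ℝ) ^ (2 * ℓ₀) - 1))) /
    (3 : ℝ) ^ (6 * ℓ₀)

/-! With `x = 3^{ℓ₀}`, `d₀ = gcd((x⁵+1)/2, (x¹⁰-1)/(x²-1))`. Since `x¹⁰-1 = (x⁵+1)(x⁵-1)` and
`x²-1 = (x+1)(x-1)`, the cofactor `(x⁵+1)/(x+1)` divides both arguments of the gcd (the first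
because `x+1` is even), so `d₀ ≥ (x⁵+1)/(x+1)` and
`(x¹⁰-1)/(d₀(x²-1)) ≤ (x⁵-1)/(x-1) = x⁴+x³+x²+x+1`, which is `o(x⁶)`. -/

namespace Nat

variable {x n : ℕ}

theorem add_one_dvd_pow_add_one (x : ℕ) (hn : Odd n) : x + 1 ∣ x ^ n + 1 := by
  simpa only [one_pow] using Odd.nat_add_dvd_pow_add_pow x 1 hn

theorem pow_add_one_div_add_one_dvd_div_two (hx : Odd x) (hn : Odd n) :
    (x ^ n + 1) / (x + 1) ∣ (x ^ n + 1) / 2 := by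
  obtain ⟨Q, hQ⟩ := add_one_dvd_pow_add_one x hn
  rw [hQ, Nat.mul_div_cancel_left _ (Nat.succ_pos x),
    ← Nat.div_mul_right_comm hx.add_one.two_dvd]
  exact dvd_mul_left _ _

theorem pow_add_one_div_add_one_dvd_pow_two_mul_sub_one_div (hn : Odd n) :
    (x ^ n + 1) / (x + 1) ∣ (x ^ (2 * n) - 1) / (x ^ 2 - 1) := by
  have hnum : x ^ (2 * n) - 1 = (x ^ n + 1) * (x ^ n - 1) := by
    rw [pow_mul', ← Nat.sq_sub_sq, one_pow]
  have hden : x ^ 2 - 1 = (x + 1) * (x - 1) := by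
    rw [← Nat.sq_sub_sq, one_pow]
  rw [hnum, hden, Nat.mul_div_mul_comm (add_one_dvd_pow_add_one x hn)
    (by simpa only [one_pow] using Nat.sub_dvd_pow_sub_pow x 1 n)]
  exact dvd_mul_right _ _

theorem pow_add_one_div_add_one_dvd_gcd (hx : Odd x) (hn : Odd n) :
    (x ^ n + 1) / (x + 1) ∣ Nat.gcd ((x ^ n + 1) / 2) ((x ^ (2 * n) - 1) / (x ^ 2 - 1)) :=
  Nat.dvd_gcd (pow_add_one_div_add_one_dvd_div_two hx hn)
    (pow_add_one_div_add_one_dvd_pow_two_mul_sub_one_div hn)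

theorem pow_add_one_div_add_one_pos (hn : Odd n) : 0 < (x ^ n + 1) / (x + 1) :=
  Nat.div_pos (Nat.le_of_dvd (by positivity) (add_one_dvd_pow_add_one x hn)) (Nat.succ_pos x)

end Nat

theorem pow_two_mul_sub_one_div_le_div_sub_one {x n d : ℕ} (hx : 1 < x) (hn : Odd n)
    (hd : (x ^ n + 1) / (x + 1) ≤ d) :
    ((x : ℝ) ^ (2 * n) - 1) / (d * ((x : ℝ) ^ 2 - 1)) ≤ ((x : ℝ) ^ n - 1) / (x - 1) := by
  set Q := (x ^ n + 1) / (x + 1)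
  have hQ : (Q : ℝ) * (x + 1) = (x : ℝ) ^ n + 1 := by
    exact_mod_cast Nat.div_mul_cancel (Nat.add_one_dvd_pow_add_one x hn)
  have hQpos : (0 : ℝ) < Q := by exact_mod_cast Nat.pow_add_one_div_add_one_pos hn
  have hQd : (Q : ℝ) ≤ d := by exact_mod_cast hd
  have hx1 : (1 : ℝ) < x := by exact_mod_cast hx
  have hgeom : 0 ≤ ((x : ℝ) ^ n - 1) / (x - 1) :=
    div_nonneg (sub_nonneg.2 (one_le_pow₀ hx1.le)) (sub_nonneg.2 hx1.le)
  calc ((x : ℝ) ^ (2 * n) - 1) / (d * ((x : ℝ) ^ 2 - 1))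
      = Q / d * (((x : ℝ) ^ n - 1) / (x - 1)) := by
        have hnum : (x : ℝ) ^ (2 * n) - 1 = Q * (x + 1) * ((x : ℝ) ^ n - 1) := by
          rw [hQ]; ring
        have : (x : ℝ) - 1 ≠ 0 := sub_ne_zero.2 hx1.ne'
        have : (x : ℝ) + 1 ≠ 0 := by positivity
        have : (d : ℝ) ≠ 0 := (hQpos.trans_le hQd).ne'
        rw [hnum, show (x : ℝ) ^ 2 - 1 = (x + 1) * (x - 1) by ring]
        field_simp
    _ ≤ 1 * (((x : ℝ) ^ n - 1) / (x - 1)) := by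
        gcongr
        exact div_le_one_of_le₀ hQd (hQpos.le.trans hQd)
    _ = ((x : ℝ) ^ n - 1) / (x - 1) := one_mul _

theorem dZero_eq (ℓ₀ : ℕ) :
    dZero ℓ₀ = Nat.gcd (((3 ^ ℓ₀) ^ 5 + 1) / 2) (((3 ^ ℓ₀) ^ (2 * 5) - 1) / ((3 ^ ℓ₀) ^ 2 - 1)) := by
  simp only [dZero, ← pow_mul']

theorem quot_dvd_dZero (ℓ₀ : ℕ) : (3 ^ (5 * ℓ₀) + 1) / (3 ^ ℓ₀ + 1) ∣ dZero ℓ₀ := by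
  rw [dZero_eq, pow_mul']
  exact Nat.pow_add_one_div_add_one_dvd_gcd (Odd.pow (by decide)) (by decide)

theorem quot_le_dZero (ℓ₀ : ℕ) : ((3 ^ ℓ₀) ^ 5 + 1) / (3 ^ ℓ₀ + 1) ≤ dZero ℓ₀ := by
  rw [← pow_mul']
  refine Nat.le_of_dvd (Nat.gcd_pos_of_pos_left _ ?_) (quot_dvd_dZero ℓ₀)
  have : 1 ≤ 3 ^ (5 * ℓ₀) := Nat.one_le_pow _ _ (by norm_num)
  omega

theorem mRatio_le (b ℓ₀ : ℕ) (hℓ₀ : 0 < ℓ₀) :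
    mRatio b ℓ₀ ≤ (b : ℝ) * ((3 : ℝ) ^ (4 * ℓ₀) + 3 ^ (3 * ℓ₀) + 3 ^ (2 * ℓ₀) + 3 ^ ℓ₀ + 1) /
      (3 : ℝ) ^ (6 * ℓ₀) := by
  have hx : 1 < 3 ^ ℓ₀ := Nat.one_lt_pow hℓ₀.ne' (by norm_num)
  have hquot := pow_two_mul_sub_one_div_le_div_sub_one hx (by decide : Odd 5) (quot_le_dZero ℓ₀)
  have hx1 : (1 : ℝ) < 3 ^ ℓ₀ := by exact_mod_cast hx
  have hgeom : ((3 : ℝ) ^ ℓ₀) ^ 5 - 1 = (3 ^ ℓ₀ - 1) *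
      ((3 ^ ℓ₀) ^ 4 + (3 ^ ℓ₀) ^ 3 + (3 ^ ℓ₀) ^ 2 + 3 ^ ℓ₀ + 1) := by ring
  push_cast at hquot
  rw [hgeom, mul_div_cancel_left₀ _ (sub_ne_zero.2 hx1.ne')] at hquot
  simp only [mRatio, pow_mul']
  rw [mul_div_assoc]
  gcongr

theorem mRatio_nonneg (b ℓ₀ : ℕ) : 0 ≤ mRatio b ℓ₀ := by
  have h10 : (0 : ℝ) ≤ 3 ^ (10 * ℓ₀) - 1 := sub_nonneg.2 (one_le_pow₀ (by norm_num))
  have h2 : (0 : ℝ) ≤ 3 ^ (2 * ℓ₀) - 1 := sub_nonneg.2 (one_le_pow₀ (by norm_num))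
  unfold mRatio
  positivity

theorem tendsto_mul_geom_div_pow_six (b : ℝ) :
    Tendsto (fun x : ℝ => b * (x ^ 4 + x ^ 3 + x ^ 2 + x + 1) / x ^ 6) atTop (nhds 0) := by
  have hpoly :
      Tendsto (fun y : ℝ => b * (y ^ 2 + y ^ 3 + y ^ 4 + y ^ 5 + y ^ 6)) (nhds 0) (nhds 0) := by
    simpa using ((by fun_prop : Continuous fun y : ℝ =>
      b * (y ^ 2 + y ^ 3 + y ^ 4 + y ^ 5 + y ^ 6)).tendsto 0)
  refine (hpoly.comp tendsto_inv_atTop_zero).congr' ?_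
  filter_upwards [eventually_ne_atTop 0] with x hx
  simp only [Function.comp_apply]
  field_simp

theorem statement_19_general (b : ℕ) :
    (∀ ℓ₀ : ℕ, 0 < ℓ₀ → (3 ^ (5 * ℓ₀) + 1) / (3 ^ ℓ₀ + 1) ∣ dZero ℓ₀) ∧
    (∀ ℓ₀ : ℕ, 0 < ℓ₀ → mRatio b ℓ₀ ≤
      (b : ℝ) * ((3 : ℝ) ^ (4 * ℓ₀) + 3 ^ (3 * ℓ₀) + 3 ^ (2 * ℓ₀) + 3 ^ ℓ₀ + 1) /
        (3 : ℝ) ^ (6 * ℓ₀)) ∧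
    Tendsto (fun ℓ₀ : ℕ => mRatio b ℓ₀) atTop (nhds 0) ∧
    Tendsto (fun ℓ₀ : ℕ =>
      (b : ℝ) * ((3 : ℝ) ^ (4 * ℓ₀) + 3 ^ (3 * ℓ₀) + 3 ^ (2 * ℓ₀) + 3 ^ ℓ₀ + 1) /
        (3 : ℝ) ^ (6 * ℓ₀)) atTop (nhds 0) := by
  have hbound : Tendsto (fun ℓ₀ : ℕ =>
      (b : ℝ) * ((3 : ℝ) ^ (4 * ℓ₀) + 3 ^ (3 * ℓ₀) + 3 ^ (2 * ℓ₀) + 3 ^ ℓ₀ + 1) /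
        (3 : ℝ) ^ (6 * ℓ₀)) atTop (nhds 0) := by
    simpa only [pow_mul', Function.comp_def] using (tendsto_mul_geom_div_pow_six b).comp
      (tendsto_pow_atTop_atTop_of_one_lt (by norm_num : (1 : ℝ) < 3))
  refine ⟨fun ℓ₀ _ => quot_dvd_dZero ℓ₀, mRatio_le b, ?_, hbound⟩
  refine tendsto_of_tendsto_of_tendsto_of_le_of_le' tendsto_const_nhds hbound
    (Eventually.of_forall (mRatio_nonneg b)) ?_
  filter_upwards [eventually_gt_atTop 0] with ℓ₀ hℓ₀
  exact mRatio_le b ℓ₀ hℓ₀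

/-- For `p = 3`, `r = p₀ = 5`, `t = 2`: the quantity `(3^{5ℓ₀}+1)/(3^{ℓ₀}+1)` divides `d₀`;
consequently, for fixed `b`, the ratio `m/3^{6ℓ₀}` with `m = b(√q-1)/(d₀(3^{2ℓ₀}-1))`
is at most `b(3^{4ℓ₀}+3^{3ℓ₀}+3^{2ℓ₀}+3^{ℓ₀}+1)/3^{6ℓ₀}`, which tends to `0`
as `ℓ₀ → ∞`. -/
theorem statement_19 (b : ℕ) (hb : 0 < b) :
    (∀ ℓ₀ : ℕ, 0 < ℓ₀ → (3 ^ (5 * ℓ₀) + 1) / (3 ^ ℓ₀ + 1) ∣ dZero ℓ₀) ∧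
    (∀ ℓ₀ : ℕ, 0 < ℓ₀ → mRatio b ℓ₀ ≤
      (b : ℝ) * ((3 : ℝ) ^ (4 * ℓ₀) + 3 ^ (3 * ℓ₀) + 3 ^ (2 * ℓ₀) + 3 ^ ℓ₀ + 1) /
        (3 : ℝ) ^ (6 * ℓ₀)) ∧
    Tendsto (fun ℓ₀ : ℕ => mRatio b ℓ₀) atTop (nhds 0) ∧
    Tendsto (fun ℓ₀ : ℕ =>
      (b : ℝ) * ((3 : ℝ) ^ (4 * ℓ₀) + 3 ^ (3 * ℓ₀) + 3 ^ (2 * ℓ₀) + 3 ^ ℓ₀ + 1) /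
        (3 : ℝ) ^ (6 * ℓ₀)) atTop (nhds 0) :=
  statement_19_general b
end
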